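/- (Theorem 2: regret bound of the online linear control algorithm with disturbances.) Let A be a (κ,γ)-strongly stable continuous linear map on a finite-dimensional real inner product space E, B : F →L[ℝ] E a continuous linear map from a finite-dimensional real inner product space F, U ⊆ F, X = {x ∈ E : ∃ u ∈ U, x = A x + B u} nonempty, and Π : E → E a map satisfying Π y ∈ X and ‖Π y − x‖ ≤ ‖y − x‖ for all y ∈ E, x ∈ X. Let L > 0, D > 0, T ≥ 1, η = 2γ/(L·√(T·(1 + 4κ²))), (w_t)_{t≥1} a sequence in E, and (f_t)_{t=1}^T convex differentiable real-valued functions on E. Suppose the sequences (x_t), (x̄_t), (z_t) and inputs (u_t) in U satisfy: z_1 ∈ X, z_{t+1} = Π(z_t − η·∇f_t(x_t)), B u_t = (I − A) z_t, x_{t+1} = A x_t + B u_t + w_t, x̄_1 = x_1, x̄_{t+1} = A x̄_t + B u_t, and set x^d_t = x_t − x̄_t. Assume ‖x̄_t‖ ≤ D and ‖z_t‖ ≤ D for all t, and for every t and every ȳ ∈ E with ‖ȳ‖ ≤ D, ‖∇f_t(ȳ + x^d_t)‖ ≤ L·D. Fix u ∈ U with steady state x_u = A x_u + B u satisfying ‖x_u‖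 ≤ D, and let (x_t^u) satisfy x_1^u = x_1 and x_{t+1}^u = A x_t^u + B u + w_t, with the nominal trajectories x̄_t^u = x_t^u − x^d_t satisfying ‖x̄_t^u‖ ≤ D for all t. Then Σ_{t=1}^T f_t(x_t) − Σ_{t=1}^T f_t(x_t^u) ≤ (2·L·D²/γ)·(√(T·(1 + 4κ²)) + 2κ). -/

import Mathlib

/-!
Let `g t = ∇f t (x t)`. By convexity the regret is at most `∑ ⟪g t, x t - xtraj t⟫`, and we split
`x t - xtraj t = (z t - xu) + e t`. The first part is the regret of projected online gradient
descent on the steady-state set against the steady state `xu`, at most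
`‖z 1 - xu‖² / (2η) + T η (LD)² / 2`. The disturbances cancel in the gap `e t`, which obeys
`e (t + 1) = A (e t) + (z t - z (t + 1))` with `e 1 = xu - z 1`; strong stability makes it decay
geometrically up to the drift `‖z t - z (t + 1)‖ ≤ η L D` of the iterates, so
`∑ ‖e t‖ ≤ κ (2D + T η L D) / γ`. The step size `η` balances the resulting terms.
-/

/-- A continuous linear map `A` is `(κ,γ)`-strongly stable if `A = H ∘ J ∘ H⁻¹` for some
invertible continuous linear map `H` and continuous linear map `J` with `‖J‖ ≤ 1 - γ` and
`‖H‖·‖H⁻¹‖ ≤ κ`. -/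
def StronglyStable {E : Type*} [NormedAddCommGroup E] [InnerProductSpace ℝ E]
    (κ γ : ℝ) (A : E →L[ℝ] E) : Prop :=
  ∃ (H : E ≃L[ℝ] E) (J : E →L[ℝ] E),
    A = (H : E →L[ℝ] E).comp (J.comp (H.symm : E →L[ℝ] E)) ∧
      ‖J‖ ≤ 1 - γ ∧ ‖(H : E →L[ℝ] E)‖ * ‖(H.symm : E →L[ℝ] E)‖ ≤ κ

open Finset
open scoped RealInnerProductSpace

section

variable {E : Type*} [NormedAddCommGroup E] [InnerProductSpace ℝ E]

theorem ConvexOn.sub_le_inner_gradient [CompleteSpace E] {f : E → ℝ}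
    (hf : ConvexOn ℝ Set.univ f) {a : E} (hfa : DifferentiableAt ℝ f a) (b : E) :
    f a - f b ≤ ⟪gradient f a, a - b⟫ := by
  have hline : ConvexOn ℝ Set.univ (f ∘ (AffineMap.lineMap a b : ℝ →ᵃ[ℝ] E)) := by
    simpa using hf.comp_affineMap (AffineMap.lineMap a b : ℝ →ᵃ[ℝ] E)
  have hderiv : HasDerivAt (f ∘ (AffineMap.lineMap a b : ℝ →ᵃ[ℝ] E)) ⟪gradient f a, b - a⟫ 0 := by
    have hf' := hfa.hasGradientAt.hasFDerivAt
    rw [← AffineMap.lineMap_apply_zero (k := ℝ) a b] at hf'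
    simpa using hf'.comp_hasDerivAt (0 : ℝ) AffineMap.hasDerivAt_lineMap
  have hslope := hline.le_slope_of_hasDerivAt (Set.mem_univ 0) (Set.mem_univ 1) one_pos hderiv
  rw [slope_def_field] at hslope
  have hneg : ⟪gradient f a, b - a⟫ = -⟪gradient f a, a - b⟫ := by
    rw [← inner_neg_right, neg_sub]
  simp only [Function.comp_apply, AffineMap.lineMap_apply_zero, AffineMap.lineMap_apply_one,
    sub_zero, div_one] at hslope
  linarith

theorem two_mul_inner_le_of_norm_sub_le {z z' g p : E} {η : ℝ}
    (h : ‖z' - p‖ ≤ ‖z - η • g - p‖) :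
    2 * η * ⟪g, z - p⟫ ≤ ‖z - p‖ ^ 2 - ‖z' - p‖ ^ 2 + η ^ 2 * ‖g‖ ^ 2 := by
  have hexp : ‖z - η • g - p‖ ^ 2 = ‖z - p‖ ^ 2 - 2 * η * ⟪g, z - p⟫ + η ^ 2 * ‖g‖ ^ 2 := by
    rw [sub_right_comm, norm_sub_sq_real, real_inner_smul_right, norm_smul, Real.norm_eq_abs,
      mul_pow, sq_abs, real_inner_comm]
    ring
  nlinarith [pow_le_pow_left₀ (norm_nonneg _) h 2]

theorem sum_inner_le_of_projected_gradient {z g : ℕ → E} {p : E} {η G : ℝ} {n : ℕ} (hη : 0 < η)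
    (hstep : ∀ k < n, ‖z (k + 1) - p‖ ≤ ‖z k - η • g k - p‖) (hg : ∀ k < n, ‖g k‖ ≤ G) :
    ∑ k ∈ range n, ⟪g k, z k - p⟫ ≤ ‖z 0 - p‖ ^ 2 / (2 * η) + n * (η * G ^ 2 / 2) := by
  have hsum : ∑ k ∈ range n, 2 * η * ⟪g k, z k - p⟫ ≤
      ∑ k ∈ range n, (‖z k - p‖ ^ 2 - ‖z (k + 1) - p‖ ^ 2 + η ^ 2 * G ^ 2) := by
    refine sum_le_sum fun k hk => ?_
    have hk := mem_range.1 hk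
    have hG := pow_le_pow_left₀ (norm_nonneg _) (hg k hk) 2
    nlinarith [two_mul_inner_le_of_norm_sub_le (hstep k hk), sq_nonneg η]
  rw [← mul_sum, sum_add_distrib, sum_range_sub' (fun k => ‖z k - p‖ ^ 2), sum_const,
    card_range, nsmul_eq_mul] at hsum
  rw [div_add' _ _ _ (by positivity), le_div_iff₀ (by positivity)]
  nlinarith [sq_nonneg ‖z n - p‖]

/-- Gradients taken at `x k` drive the iterates `z k`; the regret against `y k` is that of
gradient descent against `p` plus the cost of the mismatch `(x k - y k) - (z k - p)`. -/
theorem sum_sub_le_of_projected_gradient [CompleteSpace E] {f : ℕ → E → ℝ} {x y z : ℕ → E}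
    {p : E} {η G : ℝ} {n : ℕ} (hη : 0 < η)
    (hf : ∀ k < n, ConvexOn ℝ Set.univ (f k)) (hfx : ∀ k < n, DifferentiableAt ℝ (f k) (x k))
    (hg : ∀ k < n, ‖gradient (f k) (x k)‖ ≤ G)
    (hstep : ∀ k < n, ‖z (k + 1) - p‖ ≤ ‖z k - η • gradient (f k) (x k) - p‖) :
    ∑ k ∈ range n, (f k (x k) - f k (y k)) ≤ ‖z 0 - p‖ ^ 2 / (2 * η) + n * (η * G ^ 2 / 2) +
      G * ∑ k ∈ range n, ‖x k - y k - (z k - p)‖ := by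
  have hterm : ∀ k < n, f k (x k) - f k (y k) ≤
      ⟪gradient (f k) (x k), z k - p⟫ + G * ‖x k - y k - (z k - p)‖ := fun k hk =>
    calc f k (x k) - f k (y k)
        ≤ ⟪gradient (f k) (x k), x k - y k⟫ := (hf k hk).sub_le_inner_gradient (hfx k hk) _
      _ = ⟪gradient (f k) (x k), z k - p⟫ +
            ⟪gradient (f k) (x k), x k - y k - (z k - p)⟫ := by
          rw [← inner_add_right, add_sub_cancel]
      _ ≤ _ := by
          gcongr
          exact (real_inner_le_norm _ _).trans
            (mul_le_mul_of_nonneg_right (hg k hk) (norm_nonneg _))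
  calc ∑ k ∈ range n, (f k (x k) - f k (y k))
      ≤ ∑ k ∈ range n, (⟪gradient (f k) (x k), z k - p⟫ + G * ‖x k - y k - (z k - p)‖) :=
        sum_le_sum fun k hk => hterm k (mem_range.1 hk)
    _ ≤ _ := by
        rw [sum_add_distrib, ← mul_sum]
        gcongr
        exact sum_inner_le_of_projected_gradient hη hstep hg

end

theorem le_one_sub_pow_mul_add_div {a : ℕ → ℝ} {γ b : ℝ} {n : ℕ} (hγ : 0 < γ) (hγ1 : γ ≤ 1)
    (hb : 0 ≤ b) (ha : ∀ k < n, a (k + 1) ≤ (1 - γ) * a k + b) :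
    a n ≤ (1 - γ) ^ n * a 0 + b / γ := by
  induction n with
  | zero => simpa using div_nonneg hb hγ.le
  | succ n ih =>
    have ih := ih fun k hk => ha k (by omega)
    calc a (n + 1) ≤ (1 - γ) * a n + b := ha n (by omega)
      _ ≤ (1 - γ) * ((1 - γ) ^ n * a 0 + b / γ) + b := by gcongr
      _ = (1 - γ) ^ (n + 1) * a 0 + b / γ := by field_simp; ring

theorem sum_one_sub_pow_le {γ : ℝ} (hγ : 0 < γ) (hγ1 : γ ≤ 1) (n : ℕ) :
    ∑ k ∈ range n, (1 - γ) ^ k ≤ 1 / γ := by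
  have h := geom_sum_Ico_le_of_lt_one (m := 0) (n := n) (sub_nonneg.2 hγ1) (by linarith)
  rwa [← range_eq_Ico, pow_zero, sub_sub_cancel] at h

namespace StronglyStable

variable {E : Type*} [NormedAddCommGroup E] [InnerProductSpace ℝ E] {κ γ : ℝ} {A : E →L[ℝ] E}

theorem nonneg (hA : StronglyStable κ γ A) : 0 ≤ κ := by
  obtain ⟨H, J, -, -, hκ⟩ := hA
  exact (by positivity : (0 : ℝ) ≤ _).trans hκ

theorem one_le [Nontrivial E] (hA : StronglyStable κ γ A) : 1 ≤ κ := by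
  obtain ⟨H, J, -, -, hκ⟩ := hA
  calc (1 : ℝ) = ‖ContinuousLinearMap.id ℝ E‖ := ContinuousLinearMap.norm_id.symm
    _ = ‖(H : E →L[ℝ] E).comp (H.symm : E →L[ℝ] E)‖ := by rw [H.coe_comp_coe_symm]
    _ ≤ _ := ContinuousLinearMap.opNorm_comp_le _ _
    _ ≤ κ := hκ

theorem norm_le_of_forced (hA : StronglyStable κ γ A) (hγ : 0 < γ) (hγ1 : γ ≤ 1)
    {v c : ℕ → E} {M : ℝ} {n : ℕ} (hM : 0 ≤ M)
    (hv : ∀ k < n, v (k + 1) = A (v k) + c k) (hc : ∀ k < n, ‖c k‖ ≤ M) :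
    ‖v n‖ ≤ κ * ((1 - γ) ^ n * ‖v 0‖ + M / γ) := by
  obtain ⟨H, J, rfl, hJ, hκ⟩ := hA
  set Hi : E →L[ℝ] E := (H.symm : E →L[ℝ] E)
  -- In the coordinates `H⁻¹ v` the map `A` becomes the contraction `J`.
  have hrec : ∀ k < n, ‖Hi (v (k + 1))‖ ≤ (1 - γ) * ‖Hi (v k)‖ + ‖Hi‖ * M := fun k hk =>
    calc ‖Hi (v (k + 1))‖ = ‖J (Hi (v k)) + Hi (c k)‖ := by simp [hv k hk, Hi]
      _ ≤ ‖J‖ * ‖Hi (v k)‖ + ‖Hi‖ * ‖c k‖ :=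
          (norm_add_le _ _).trans (add_le_add (J.le_opNorm _) (Hi.le_opNorm _))
      _ ≤ (1 - γ) * ‖Hi (v k)‖ + ‖Hi‖ * M := by gcongr; exact hc k hk
  have hHi := le_one_sub_pow_mul_add_div (a := fun k => ‖Hi (v k)‖) hγ hγ1
    (mul_nonneg (norm_nonneg Hi) hM) hrec
  calc ‖v n‖ = ‖(H : E →L[ℝ] E) (Hi (v n))‖ := by simp [Hi]
    _ ≤ ‖(H : E →L[ℝ] E)‖ * ((1 - γ) ^ n * ‖Hi (v 0)‖ + ‖Hi‖ * M / γ) :=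
        (ContinuousLinearMap.le_opNorm _ _).trans (by gcongr)
    _ ≤ ‖(H : E →L[ℝ] E)‖ * ((1 - γ) ^ n * (‖Hi‖ * ‖v 0‖) + ‖Hi‖ * M / γ) := by
        have := pow_nonneg (sub_nonneg.2 hγ1) n
        gcongr
        exact Hi.le_opNorm _
    _ = ‖(H : E →L[ℝ] E)‖ * ‖Hi‖ * ((1 - γ) ^ n * ‖v 0‖ + M / γ) := by ring
    _ ≤ κ * ((1 - γ) ^ n * ‖v 0‖ + M / γ) := by
        have := pow_nonneg (sub_nonneg.2 hγ1) n
        gcongr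

theorem sum_norm_le_of_forced (hA : StronglyStable κ γ A) (hγ : 0 < γ) (hγ1 : γ ≤ 1)
    {v c : ℕ → E} {M : ℝ} {n : ℕ} (hM : 0 ≤ M)
    (hv : ∀ k < n, v (k + 1) = A (v k) + c k) (hc : ∀ k < n, ‖c k‖ ≤ M) :
    ∑ k ∈ range n, ‖v k‖ ≤ κ * (‖v 0‖ / γ + n * (M / γ)) := by
  have hκ := hA.nonneg
  calc ∑ k ∈ range n, ‖v k‖ ≤ ∑ k ∈ range n, κ * ((1 - γ) ^ k * ‖v 0‖ + M / γ) :=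
        sum_le_sum fun k hk => hA.norm_le_of_forced hγ hγ1 hM
          (fun j hj => hv j (by simp at hk; omega)) (fun j hj => hc j (by simp at hk; omega))
    _ = κ * ((∑ k ∈ range n, (1 - γ) ^ k) * ‖v 0‖ + n * (M / γ)) := by
        rw [← mul_sum, sum_add_distrib, ← sum_mul, sum_const, card_range, nsmul_eq_mul]
    _ ≤ κ * (1 / γ * ‖v 0‖ + n * (M / γ)) := by
        gcongr
        exact sum_one_sub_pow_le hγ hγ1 n
    _ = κ * (‖v 0‖ / γ + n * (M / γ)) := by ring

end StronglyStable

theorem regret_terms_le_of_step_size {κ γ L D T η r : ℝ} (hκ : 1 ≤ κ) (hγ : 0 < γ)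
    (hγ1 : γ ≤ 1) (hL : 0 < L) (hT : 0 < T) (hr : 0 ≤ r) (hrD : r ≤ 2 * D)
    (hη : η = 2 * γ / (L * Real.sqrt (T * (1 + 4 * κ ^ 2)))) :
    r ^ 2 / (2 * η) + T * (η * (L * D) ^ 2 / 2) + L * D * (κ * (r / γ + T * (η * (L * D) / γ))) ≤
      2 * L * D ^ 2 / γ * (Real.sqrt (T * (1 + 4 * κ ^ 2)) + 2 * κ) := by
  set S := Real.sqrt (T * (1 + 4 * κ ^ 2))
  have hS : 0 < S := Real.sqrt_pos.2 (by positivity)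
  have hS2 : S ^ 2 = T * (1 + 4 * κ ^ 2) := Real.sq_sqrt (by positivity)
  have hD : 0 ≤ D := by linarith
  subst hη
  have hgd : r ^ 2 / (2 * (2 * γ / (L * S))) ≤ L * D ^ 2 * S / γ := by
    rw [div_le_div_iff₀ (by positivity) hγ]
    field_simp
    nlinarith [mul_le_mul_of_nonneg_left (sq_le_sq' (by linarith) hrD) (by positivity : 0 ≤ L * S)]
  have hdrift : T * (2 * γ / (L * S) * (L * D) ^ 2 / 2) +
      L * D * (κ * (T * (2 * γ / (L * S) * (L * D) / γ))) ≤ L * D ^ 2 * S / γ := by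
    have hγκ : γ * (γ + 2 * κ) ≤ 1 + 4 * κ ^ 2 := by nlinarith
    have : T * (L * D ^ 2) * (γ * (γ + 2 * κ)) ≤ T * (L * D ^ 2) * (1 + 4 * κ ^ 2) := by gcongr
    calc _ = T * (L * D ^ 2) * (γ + 2 * κ) / S := by field_simp
      _ ≤ L * D ^ 2 * S / γ := by
          rw [div_le_div_iff₀ hS hγ, mul_assoc (L * D ^ 2) S S, ← pow_two, hS2]
          linarith
  have htrans : L * D * (κ * (r / γ)) ≤ 4 * κ * L * D ^ 2 / γ := by
    calc _ = L * D * κ * r / γ := by ring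
      _ ≤ 4 * κ * L * D ^ 2 / γ := by
          gcongr ?_ / γ
          nlinarith [mul_nonneg (mul_nonneg (mul_nonneg hL.le hD) (by linarith : 0 ≤ κ))
            (by linarith : 0 ≤ 4 * D - r)]
  calc _ = r ^ 2 / (2 * (2 * γ / (L * S))) + (T * (2 * γ / (L * S) * (L * D) ^ 2 / 2) +
        L * D * (κ * (T * (2 * γ / (L * S) * (L * D) / γ)))) + L * D * (κ * (r / γ)) := by ring
    _ ≤ L * D ^ 2 * S / γ + L * D ^ 2 * S / γ + 4 * κ * L * D ^ 2 / γ := by gcongr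
    _ = _ := by ring

theorem closed_loop_gap_succ {E F : Type*} [NormedAddCommGroup E] [NormedSpace ℝ E]
    [NormedAddCommGroup F] [NormedSpace ℝ F] {A : E →L[ℝ] E} {B : F →L[ℝ] E} {u v : F}
    {z xu : E} (hxu : xu = A xu + B u) (hv : B v = ((1 : E →L[ℝ] E) - A) z) (x x' z' w : E) :
    A x + B v + w - (A x' + B u + w) - (z' - xu) = A (x - x' - (z - xu)) + (z - z') := by
  rw [hv, eq_sub_of_add_eq' hxu.symm]
  simp only [sub_apply, one_apply_eq_self, map_sub]
  abel

theorem online_linear_control_regret_disturbed_general {E F : Type*}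
    [NormedAddCommGroup E] [InnerProductSpace ℝ E] [FiniteDimensional ℝ E]
    [NormedAddCommGroup F] [InnerProductSpace ℝ F]
    {κ γ L D η : ℝ} (hγ : 0 < γ) (hγ1 : γ ≤ 1) (hL : 0 < L)
    {A : E →L[ℝ] E} (hA : StronglyStable κ γ A) (B : F →L[ℝ] E) (U : Set F)
    (proj : E → E)
    (hprojX : ∀ y : E, proj y ∈ {xx : E | ∃ uu ∈ U, xx = A xx + B uu})
    (hproj : ∀ y : E, ∀ xx ∈ {xx : E | ∃ uu ∈ U, xx = A xx + B uu}, ‖proj y - xx‖ ≤ ‖y - xx‖)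
    (T : ℕ) (hT : 1 ≤ T)
    (hη : η = 2 * γ / (L * Real.sqrt (T * (1 + 4 * κ ^ 2))))
    (w : ℕ → E) (f : ℕ → E → ℝ)
    (hconv : ∀ t ∈ Finset.Icc 1 T, ConvexOn ℝ Set.univ (f t))
    (hdiff : ∀ t ∈ Finset.Icc 1 T, Differentiable ℝ (f t))
    (x xb z : ℕ → E) (useq : ℕ → F)
    (hz1 : z 1 ∈ {xx : E | ∃ uu ∈ U, xx = A xx + B uu})
    (hzrec : ∀ t : ℕ, 1 ≤ t → t ≤ T → z (t + 1) = proj (z t - η • gradient (f t) (x t)))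
    (hBu : ∀ t : ℕ, 1 ≤ t → t ≤ T → B (useq t) = ((1 : E →L[ℝ] E) - A) (z t))
    (hxrec : ∀ t : ℕ, 1 ≤ t → t ≤ T → x (t + 1) = A (x t) + B (useq t) + w t)
    (hxbbd : ∀ t ∈ Finset.Icc 1 T, ‖xb t‖ ≤ D)
    (hzbd : ∀ t ∈ Finset.Icc 1 T, ‖z t‖ ≤ D)
    (hgradbd : ∀ t ∈ Finset.Icc 1 T, ∀ yb : E, ‖yb‖ ≤ D →
      ‖gradient (f t) (yb + (x t - xb t))‖ ≤ L * D)
    (u : F) (hu : u ∈ U) (xu : E) (hxu : xu = A xu + B u) (hxubd : ‖xu‖ ≤ D)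
    (xtraj : ℕ → E) (hxtraj1 : xtraj 1 = x 1)
    (hxtraj : ∀ t : ℕ, 1 ≤ t → t ≤ T → xtraj (t + 1) = A (xtraj t) + B u + w t) :
    (∑ t ∈ Finset.Icc 1 T, f t (x t)) - ∑ t ∈ Finset.Icc 1 T, f t (xtraj t) ≤
      2 * L * D ^ 2 / γ * (Real.sqrt (T * (1 + 4 * κ ^ 2)) + 2 * κ) := by
  -- The final balancing uses `1 ≤ κ`, which strong stability forces only on a nontrivial space.
  rcases subsingleton_or_nontrivial E with hE | hE
  · rw [sum_congr rfl fun t _ => congrArg (f t) (Subsingleton.elim (x t) (xtraj t)), sub_self]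
    have := hA.nonneg
    positivity
  have hT0 : (0 : ℝ) < T := by exact_mod_cast hT
  have hη0 : 0 < η := by
    rw [hη]; have := Real.sqrt_pos.2 (by positivity : (0 : ℝ) < T * (1 + 4 * κ ^ 2)); positivity
  have hmem : ∀ k < T, k + 1 ∈ Icc 1 T := fun k hk => mem_Icc.2 ⟨by omega, by omega⟩
  have hg : ∀ k < T, ‖gradient (f (k + 1)) (x (k + 1))‖ ≤ L * D := fun k hk => by
    simpa using hgradbd _ (hmem k hk) _ (hxbbd _ (hmem k hk))
  have hLD : 0 ≤ L * D := (norm_nonneg _).trans (hg 0 (by omega))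
  have hzX : ∀ k < T, z (k + 1) ∈ {xx : E | ∃ uu ∈ U, xx = A xx + B uu} := by
    rintro (_ | k) hk
    · exact hz1
    · rw [hzrec (k + 1) (by omega) (by omega)]; exact hprojX _
  have hdrift : ∀ k < T, ‖z (k + 1) - z (k + 1 + 1)‖ ≤ η * (L * D) := fun k hk => by
    rw [norm_sub_rev, hzrec _ (by omega) (by omega)]
    refine (hproj _ _ (hzX k hk)).trans ?_
    rw [sub_sub_cancel_left, norm_neg, norm_smul, Real.norm_of_nonneg hη0.le]
    exact mul_le_mul_of_nonneg_left (hg k hk) hη0.le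
  have hgap : ∀ k < T, x (k + 1 + 1) - xtraj (k + 1 + 1) - (z (k + 1 + 1) - xu) =
      A (x (k + 1) - xtraj (k + 1) - (z (k + 1) - xu)) + (z (k + 1) - z (k + 1 + 1)) :=
    fun k hk => by
      rw [hxrec _ (by omega) (by omega), hxtraj _ (by omega) (by omega)]
      exact closed_loop_gap_succ hxu (hBu _ (by omega) (by omega)) _ _ _ _
  have hz1xu : ‖z 1 - xu‖ ≤ 2 * D := by
    linarith [norm_sub_le (z 1) xu, hzbd 1 (mem_Icc.2 ⟨le_rfl, hT⟩)]
  rw [← sum_sub_distrib, ← Ico_add_one_right_eq_Icc, sum_Ico_eq_sum_range, Nat.add_sub_cancel]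
  simp only [add_comm 1]
  calc _ ≤ ‖z 1 - xu‖ ^ 2 / (2 * η) + T * (η * (L * D) ^ 2 / 2) + L * D *
        ∑ k ∈ range T, ‖x (k + 1) - xtraj (k + 1) - (z (k + 1) - xu)‖ :=
        sum_sub_le_of_projected_gradient (f := fun k => f (k + 1)) (x := fun k => x (k + 1))
          (y := fun k => xtraj (k + 1)) (z := fun k => z (k + 1)) hη0
          (fun k hk => hconv _ (hmem k hk))
          (fun k hk => (hdiff _ (hmem k hk)) _) hg fun k hk => by
            rw [hzrec _ (by omega) (by omega)]; exact hproj _ _ ⟨u, hu, hxu⟩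
    _ ≤ ‖z 1 - xu‖ ^ 2 / (2 * η) + T * (η * (L * D) ^ 2 / 2) + L * D *
        (κ * (‖z 1 - xu‖ / γ + T * (η * (L * D) / γ))) := by
        gcongr
        simpa [hxtraj1, norm_sub_rev xu] using hA.sum_norm_le_of_forced
          (v := fun k => x (k + 1) - xtraj (k + 1) - (z (k + 1) - xu)) hγ hγ1
          (mul_nonneg hη0.le hLD) hgap hdrift
    _ ≤ _ := regret_terms_le_of_step_size hA.one_le hγ hγ1 hL hT0
        (norm_nonneg _) hz1xu hη

/-- Theorem 2: regret bound of the online linear control algorithm with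
adversarial disturbances, against the benchmark of a fixed input `u ∈ U`. -/
theorem online_linear_control_regret_disturbed {E F : Type*}
    [NormedAddCommGroup E] [InnerProductSpace ℝ E] [FiniteDimensional ℝ E]
    [NormedAddCommGroup F] [InnerProductSpace ℝ F] [FiniteDimensional ℝ F]
    {κ γ L D η : ℝ} (hκ : 0 < κ) (hγ : 0 < γ) (hγ1 : γ ≤ 1) (hL : 0 < L) (hD : 0 < D)
    {A : E →L[ℝ] E} (hA : StronglyStable κ γ A) (B : F →L[ℝ] E) (U : Set F)
    (hXne : {xx : E | ∃ uu ∈ U, xx = A xx + B uu}.Nonempty)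
    (proj : E → E)
    (hprojX : ∀ y : E, proj y ∈ {xx : E | ∃ uu ∈ U, xx = A xx + B uu})
    (hproj : ∀ y : E, ∀ xx ∈ {xx : E | ∃ uu ∈ U, xx = A xx + B uu}, ‖proj y - xx‖ ≤ ‖y - xx‖)
    (T : ℕ) (hT : 1 ≤ T)
    (hη : η = 2 * γ / (L * Real.sqrt (T * (1 + 4 * κ ^ 2))))
    (w : ℕ → E) (f : ℕ → E → ℝ)
    (hconv : ∀ t ∈ Finset.Icc 1 T, ConvexOn ℝ Set.univ (f t))
    (hdiff : ∀ t ∈ Finset.Icc 1 T, Differentiable ℝ (f t))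
    (x xb z : ℕ → E) (useq : ℕ → F)
    (huseq : ∀ t : ℕ, 1 ≤ t → t ≤ T → useq t ∈ U)
    (hz1 : z 1 ∈ {xx : E | ∃ uu ∈ U, xx = A xx + B uu})
    (hzrec : ∀ t : ℕ, 1 ≤ t → t ≤ T → z (t + 1) = proj (z t - η • gradient (f t) (x t)))
    (hBu : ∀ t : ℕ, 1 ≤ t → t ≤ T → B (useq t) = ((1 : E →L[ℝ] E) - A) (z t))
    (hxrec : ∀ t : ℕ, 1 ≤ t → t ≤ T → x (t + 1) = A (x t) + B (useq t) + w t)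
    (hxb1 : xb 1 = x 1)
    (hxbrec : ∀ t : ℕ, 1 ≤ t → t ≤ T → xb (t + 1) = A (xb t) + B (useq t))
    (hxbbd : ∀ t ∈ Finset.Icc 1 T, ‖xb t‖ ≤ D)
    (hzbd : ∀ t ∈ Finset.Icc 1 T, ‖z t‖ ≤ D)
    (hgradbd : ∀ t ∈ Finset.Icc 1 T, ∀ yb : E, ‖yb‖ ≤ D →
      ‖gradient (f t) (yb + (x t - xb t))‖ ≤ L * D)
    (u : F) (hu : u ∈ U) (xu : E) (hxu : xu = A xu + B u) (hxubd : ‖xu‖ ≤ D)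
    (xtraj : ℕ → E) (hxtraj1 : xtraj 1 = x 1)
    (hxtraj : ∀ t : ℕ, 1 ≤ t → t ≤ T → xtraj (t + 1) = A (xtraj t) + B u + w t)
    (hxtrajbd : ∀ t ∈ Finset.Icc 1 T, ‖xtraj t - (x t - xb t)‖ ≤ D) :
    (∑ t ∈ Finset.Icc 1 T, f t (x t)) - ∑ t ∈ Finset.Icc 1 T, f t (xtraj t) ≤
      2 * L * D ^ 2 / γ * (Real.sqrt (T * (1 + 4 * κ ^ 2)) + 2 * κ) :=
  online_linear_control_regret_disturbed_general hγ hγ1 hL hA B U proj hprojX hproj T hT hη w f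
    hconv hdiff x xb z useq hz1 hzrec hBu hxrec hxbbd hzbd hgradbd u hu xu hxu hxubd xtraj hxtraj1
    hxtraj
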